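/- Let B be the EABP with coefficients P^(f), P^(m). Define the set of pairs of linear forms 𝓑* = {(f,g) : f(z²) = g(z²) = f(z)g(z) for all z ∈ B}. For a pair of linear forms write f(z) = Σ_{i=1}^n α_i x_i + Σ_{j=1}^ν β_j y_j and g(z) = Σ_{i=1}^n γ_i x_i + Σ_{j=1}^ν δ_j y_j for z = Σ_i x_i e_i^(f) + Σ_j y_j e_j^(m). Define: 𝓑*_{01} = pairs (0, g) with Σ_{k=1}^n P^(f)_{ij,k} γ_k + Σ_{l=1}^ν P^(m)_{ij,l} δ_l = 0 for all i = 1,…,n and j = 1,…,ν; 𝓑*_{10} = pairs (f, 0) with Σ_{k=1}^n P^(f)_{ij,k} α_k + Σ_{l=1}^ν P^(m)_{ij,l} β_l = 0 for all i, j; 𝓑*_{12} = pairs (f, g) with f(z) = Σ_i α_i x_i, g(z) = Σ_j δ_j y_j, and Σ_{k=1}^n P^(f)_{ij,k} α_k = Σ_{l=1}^ν P^(m)_{ij,l} δ_l = α_i δ_j for all i, j; 𝓑*_{21} = pairs (f, g) with f(z) = Σ_j β_j y_j, g(z) = Σ_i γ_i x_i, and Σ_{k=1}^n P^(f)_{ij,k}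 γ_k = Σ_{l=1}^ν P^(m)_{ij,l} β_l = γ_i β_j for all i, j. Then 𝓑* = {(0,0)} ∪ 𝓑*_{01} ∪ 𝓑*_{10} ∪ 𝓑*_{12} ∪ 𝓑*_{21}. -/

import Mathlib

/-!
Write `z = (x, y)` and let `α, β` (resp. `γ, δ`) be the coordinates of `f` (resp. `g`) on the
female and male basis vectors. The square of `z` only involves the products `x i * y j`:
`h (z²) = ∑ i j, x i * y j * A_ij(h)` with
`A_ij(h) = ∑ k, Pf i j k * h (efb k) + ∑ l, Pm i j l * h (emb l)`.
In `f z * g z`, on the other hand, the purely female part is the product of the linear forms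
`x ↦ ∑ α_i x_i` and `x ↦ ∑ γ_i x_i`, and likewise for the male part. So the identity holds iff
both products of linear forms vanish, i.e. `α = 0 ∨ γ = 0` and `β = 0 ∨ δ = 0`, and the mixed
coefficients match: `A_ij(f) = A_ij(g) = α_i δ_j + β_j γ_i`. The four ways of choosing the
vanishing coordinates give the four nontrivial families.
-/

open scoped BigOperators

/-- Multiplication of the evolution algebra of a bisexual population (EABP) on
`ℝ^{n+ν} = (Fin n → ℝ) × (Fin ν → ℝ)`, with female inheritance coefficients `Pf` and male
inheritance coefficients `Pm`. -/
noncomputable def bmul {n ν : ℕ} (Pf : Fin n → Fin ν → Fin n → ℝ)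
    (Pm : Fin n → Fin ν → Fin ν → ℝ)
    (z t : (Fin n → ℝ) × (Fin ν → ℝ)) : (Fin n → ℝ) × (Fin ν → ℝ) :=
  (fun k => (1 / 2) * ∑ i, ∑ j, Pf i j k * (z.1 i * t.2 j + t.1 i * z.2 j),
   fun l => (1 / 2) * ∑ i, ∑ j, Pm i j l * (z.1 i * t.2 j + t.1 i * z.2 j))

/-- The female basis element e_i^(f) of the EABP. -/
def efb {n ν : ℕ} (i : Fin n) : (Fin n → ℝ) × (Fin ν → ℝ) := (Pi.single i 1, 0)

/-- The male basis element e_j^(m) of the EABP. -/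
def emb {n ν : ℕ} (j : Fin ν) : (Fin n → ℝ) × (Fin ν → ℝ) := (0, Pi.single j 1)

theorem LinearMap.eq_zero_or_eq_zero_of_forall_mul_eq_zero {R M : Type*} [Semiring R]
    [NoZeroDivisors R] [AddCommMonoid M] [Module R M] (φ ψ : M →ₗ[R] R)
    (h : ∀ x, φ x * ψ x = 0) : φ = 0 ∨ ψ = 0 := by
  by_contra! ⟨hφ, hψ⟩
  obtain ⟨u, hu⟩ := DFunLike.ne_iff.mp hφ
  obtain ⟨v, hv⟩ := DFunLike.ne_iff.mp hψ
  have hψu : ψ u = 0 := (mul_eq_zero.mp (h u)).resolve_left hu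
  have hφv : φ v = 0 := (mul_eq_zero.mp (h v)).resolve_right hv
  have := h (u + v)
  simp only [map_add, hψu, hφv, add_zero, zero_add] at this
  exact mul_ne_zero hu hv this

namespace EABP

variable {n ν : ℕ}

theorem apply_eq_sum (h : (Fin n → ℝ) × (Fin ν → ℝ) →ₗ[ℝ] ℝ) (z : (Fin n → ℝ) × (Fin ν → ℝ)) :
    h z = ∑ i, z.1 i * h (efb i) + ∑ j, z.2 j * h (emb j) := by
  rw [← LinearMap.coprod_comp_inl_inr h, LinearMap.coprod_apply,
    LinearMap.pi_apply_eq_sum_univ (h ∘ₗ _), LinearMap.pi_apply_eq_sum_univ (h ∘ₗ _)]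
  simp only [efb, emb, LinearMap.coprod_comp_inl_inr, LinearMap.comp_apply, LinearMap.inl_apply,
    LinearMap.inr_apply, smul_eq_mul]
  congr! with i - j <;> simp [Pi.single_apply, eq_comm]

variable (Pf : Fin n → Fin ν → Fin n → ℝ) (Pm : Fin n → Fin ν → Fin ν → ℝ)

theorem bmul_self (z : (Fin n → ℝ) × (Fin ν → ℝ)) :
    bmul Pf Pm z z = ∑ i, ∑ j, (z.1 i * z.2 j) • (Pf i j, Pm i j) := by
  ext k <;> simp [bmul, Prod.fst_sum, Prod.snd_sum, Finset.sum_apply, Finset.mul_sum] <;>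
    exact Finset.sum_congr rfl fun i _ => Finset.sum_congr rfl fun j _ => by ring

theorem apply_bmul_self (h : (Fin n → ℝ) × (Fin ν → ℝ) →ₗ[ℝ] ℝ) (z : (Fin n → ℝ) × (Fin ν → ℝ)) :
    h (bmul Pf Pm z z) = ∑ i, ∑ j, z.1 i * z.2 j *
      (∑ k, Pf i j k * h (efb k) + ∑ l, Pm i j l * h (emb l)) := by
  simp only [bmul_self, map_sum, map_smul, smul_eq_mul, apply_eq_sum h (Pf _ _, Pm _ _)]

theorem apply_bmul_efb_add_emb (h : (Fin n → ℝ) × (Fin ν → ℝ) →ₗ[ℝ] ℝ) (i : Fin n) (j : Fin ν) :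
    h (bmul Pf Pm (efb i + emb j) (efb i + emb j)) =
      ∑ k, Pf i j k * h (efb k) + ∑ l, Pm i j l * h (emb l) := by
  simp [apply_bmul_self, efb, emb, Pi.single_apply]

theorem comp_inl_eq_zero_iff (h : (Fin n → ℝ) × (Fin ν → ℝ) →ₗ[ℝ] ℝ) :
    h ∘ₗ LinearMap.inl ℝ _ _ = 0 ↔ ∀ i, h (efb i) = 0 := by
  refine ⟨fun H i => LinearMap.congr_fun H (Pi.single i 1), fun H => ?_⟩
  ext i
  exact H i

theorem comp_inr_eq_zero_iff (h : (Fin n → ℝ) × (Fin ν → ℝ) →ₗ[ℝ] ℝ) :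
    h ∘ₗ LinearMap.inr ℝ _ _ = 0 ↔ ∀ j, h (emb j) = 0 := by
  refine ⟨fun H j => LinearMap.congr_fun H (Pi.single j 1), fun H => ?_⟩
  ext j
  exact H j

theorem eq_zero_iff_forall_efb_emb (h : (Fin n → ℝ) × (Fin ν → ℝ) →ₗ[ℝ] ℝ) :
    h = 0 ↔ (∀ i, h (efb i) = 0) ∧ ∀ j, h (emb j) = 0 := by
  refine ⟨by rintro rfl; simp, fun ⟨hefb, hemb⟩ => LinearMap.ext fun z => ?_⟩
  simp [apply_eq_sum h z, hefb, hemb]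

theorem apply_mul_apply_eq (f g : (Fin n → ℝ) × (Fin ν → ℝ) →ₗ[ℝ] ℝ)
    (z : (Fin n → ℝ) × (Fin ν → ℝ)) :
    f z * g z = f (z.1, 0) * g (z.1, 0) + f (0, z.2) * g (0, z.2) +
      ∑ i, ∑ j, z.1 i * z.2 j * (f (efb i) * g (emb j) + f (emb j) * g (efb i)) := by
  have split (h : (Fin n → ℝ) × (Fin ν → ℝ) →ₗ[ℝ] ℝ) : h z = h (z.1, 0) + h (0, z.2) := by
    rw [← map_add, Prod.mk_add_mk, add_zero, zero_add]
  have cross : ∑ i, ∑ j, z.1 i * z.2 j * (f (efb i) * g (emb j) + f (emb j) * g (efb i)) =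
      f (z.1, 0) * g (0, z.2) + g (z.1, 0) * f (0, z.2) := by
    simp only [apply_eq_sum f (z.1, 0), apply_eq_sum g (z.1, 0), apply_eq_sum f (0, z.2),
      apply_eq_sum g (0, z.2), Pi.zero_apply, zero_mul, Finset.sum_const_zero, add_zero,
      zero_add, Finset.sum_mul_sum, ← Finset.sum_add_distrib]
    exact Finset.sum_congr rfl fun i _ => Finset.sum_congr rfl fun j _ => by ring
  rw [split f, split g, cross]
  ring

theorem apply_bmul_self_eq_mul_iff (f g : (Fin n → ℝ) × (Fin ν → ℝ) →ₗ[ℝ] ℝ) :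
    (∀ z, f (bmul Pf Pm z z) = f z * g z ∧ g (bmul Pf Pm z z) = f z * g z) ↔
      ((∀ i, f (efb i) = 0) ∨ ∀ i, g (efb i) = 0) ∧
      ((∀ j, f (emb j) = 0) ∨ ∀ j, g (emb j) = 0) ∧
      ∀ i j,
        ∑ k, Pf i j k * f (efb k) + ∑ l, Pm i j l * f (emb l) =
          f (efb i) * g (emb j) + f (emb j) * g (efb i) ∧
        ∑ k, Pf i j k * g (efb k) + ∑ l, Pm i j l * g (emb l) =
          f (efb i) * g (emb j) + f (emb j) * g (efb i) := by
  constructor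
  · intro H
    have hfem (x : Fin n → ℝ) : f (x, 0) * g (x, 0) = 0 := by
      rw [← (H (x, 0)).1, apply_bmul_self]
      simp
    have hmale (y : Fin ν → ℝ) : f (0, y) * g (0, y) = 0 := by
      rw [← (H (0, y)).1, apply_bmul_self]
      simp
    refine ⟨?_, ?_, fun i j => ?_⟩
    · simpa only [comp_inl_eq_zero_iff] using
        (f ∘ₗ LinearMap.inl ℝ _ _).eq_zero_or_eq_zero_of_forall_mul_eq_zero
          (g ∘ₗ LinearMap.inl ℝ _ _) hfem
    · simpa only [comp_inr_eq_zero_iff] using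
        (f ∘ₗ LinearMap.inr ℝ _ _).eq_zero_or_eq_zero_of_forall_mul_eq_zero
          (g ∘ₗ LinearMap.inr ℝ _ _) hmale
    · have hi : f (efb i) * g (efb i) = 0 := hfem _
      have hj : f (emb j) * g (emb j) = 0 := hmale _
      obtain ⟨hf, hg⟩ := H (efb i + emb j)
      rw [apply_bmul_efb_add_emb, map_add, map_add] at hf hg
      exact ⟨by linear_combination hf + hi + hj, by linear_combination hg + hi + hj⟩
  · rintro ⟨hfem, hmale, hmixed⟩ z
    have hfem' : f (z.1, 0) * g (z.1, 0) = 0 := by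
      rcases hfem with h | h <;> simp [apply_eq_sum _ (z.1, 0), h]
    have hmale' : f (0, z.2) * g (0, z.2) = 0 := by
      rcases hmale with h | h <;> simp [apply_eq_sum _ (0, z.2), h]
    rw [apply_bmul_self, apply_bmul_self, apply_mul_apply_eq, hfem', hmale', zero_add, zero_add]
    exact ⟨by simp only [hmixed], by simp only [hmixed]⟩

end EABP

theorem stmt_16 (n ν : ℕ)
    (Pf : Fin n → Fin ν → Fin n → ℝ) (Pm : Fin n → Fin ν → Fin ν → ℝ)
    (f g : (Fin n → ℝ) × (Fin ν → ℝ) →ₗ[ℝ] ℝ) :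
    (∀ z : (Fin n → ℝ) × (Fin ν → ℝ),
        f (bmul Pf Pm z z) = f z * g z ∧ g (bmul Pf Pm z z) = f z * g z)
    ↔
    ((f = 0 ∧ g = 0)
      ∨ (f = 0 ∧ ∀ (i : Fin n) (j : Fin ν),
          ∑ k, Pf i j k * g (efb k) + ∑ l, Pm i j l * g (emb l) = 0)
      ∨ (g = 0 ∧ ∀ (i : Fin n) (j : Fin ν),
          ∑ k, Pf i j k * f (efb k) + ∑ l, Pm i j l * f (emb l) = 0)
      ∨ ((∀ j : Fin ν, f (emb j) = 0) ∧ (∀ i : Fin n, g (efb i) = 0) ∧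
          ∀ (i : Fin n) (j : Fin ν),
            (∑ k, Pf i j k * f (efb k) = f (efb i) * g (emb j)) ∧
            (∑ l, Pm i j l * g (emb l) = f (efb i) * g (emb j)))
      ∨ ((∀ i : Fin n, f (efb i) = 0) ∧ (∀ j : Fin ν, g (emb j) = 0) ∧
          ∀ (i : Fin n) (j : Fin ν),
            (∑ k, Pf i j k * g (efb k) = g (efb i) * f (emb j)) ∧
            (∑ l, Pm i j l * f (emb l) = g (efb i) * f (emb j)))) := by
  rw [EABP.apply_bmul_self_eq_mul_iff, EABP.eq_zero_iff_forall_efb_emb f,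
    EABP.eq_zero_iff_forall_efb_emb g]
  constructor
  · rintro ⟨hα | hγ, hβ | hδ, hmix⟩
    · exact Or.inr <| Or.inl ⟨⟨hα, hβ⟩, fun i j => by simpa [hα, hβ] using (hmix i j).2⟩
    · exact Or.inr <| Or.inr <| Or.inr <| Or.inr ⟨hα, hδ, fun i j =>
        ⟨by simpa [hα, hδ, mul_comm] using (hmix i j).2,
          by simpa [hα, hδ, mul_comm] using (hmix i j).1⟩⟩
    · exact Or.inr <| Or.inr <| Or.inr <| Or.inl ⟨hβ, hγ, fun i j =>
        ⟨by simpa [hβ, hγ] using (hmix i j).1, by simpa [hβ, hγ] using (hmix i j).2⟩⟩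
    · exact Or.inr <| Or.inr <| Or.inl ⟨⟨hγ, hδ⟩, fun i j => by simpa [hγ, hδ] using (hmix i j).1⟩
  · rintro (⟨⟨hα, hβ⟩, hγ, hδ⟩ | ⟨⟨hα, hβ⟩, hmix⟩ | ⟨⟨hγ, hδ⟩, hmix⟩ | ⟨hβ, hγ, hmix⟩ |
      ⟨hα, hδ, hmix⟩)
    · exact ⟨Or.inl hα, Or.inl hβ, fun i j => by simp [hα, hβ, hγ, hδ]⟩
    · exact ⟨Or.inl hα, Or.inl hβ, fun i j => by simp [hα, hβ, hmix i j]⟩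
    · exact ⟨Or.inr hγ, Or.inr hδ, fun i j => by simp [hγ, hδ, hmix i j]⟩
    · exact ⟨Or.inr hγ, Or.inl hβ, fun i j => by simp [hβ, hγ, hmix i j]⟩
    · exact ⟨Or.inl hα, Or.inr hδ, fun i j => by simp [hα, hδ, hmix i j, mul_comm]⟩
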